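/- arXiv:1103.4526 — 8 statements merged into one kernel-verified Lean document; each statement's English description precedes it below -/
import Mathlib

section
/- Let X be a braided rack and let x, y, z ∈ X be such that x ▷ y = z and z ≠ y. Then y ▷ z = x and z ▷ x = y. -/
structure Rack' (X : Type*) where
  act : X → X → X
  act_bijective : ∀ x, Function.Bijective (act x)
  self_distrib : ∀ x y z, act x (act y z) = act (act x y) (act x z)

namespace Rack'

variable {X : Type*} (R : Rack' X)

/-- The left translation `φ_x : y ↦ x ▷ y` as a permutation of `X`. -/
noncomputable def phi (x : X) : Equiv.Perm X :=
  Equiv.ofBijective (R.act x) (R.act_bijective x)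

@[simp] theorem phi_apply (x y : X) : R.phi x y = R.act x y := rfl

/-- A quandle is a rack with `x ▷ x = x`. -/
def IsQuandle : Prop := ∀ x, R.act x x = x

/-- A rack is braided if it is a quandle and for all `x, y` at least one of
`x ▷ (y ▷ x) = y` and `x ▷ y = y` holds. -/
def IsBraided : Prop :=
  R.IsQuandle ∧ ∀ x y, R.act x (R.act y x) = y ∨ R.act x y = y

/-- The inner group of a rack: the subgroup of the symmetric group generated by all
left translations. -/
def innerGroup : Subgroup (Equiv.Perm X) :=
  Subgroup.closure (Set.range fun x => R.phi x)

/-- A rack is indecomposable if its inner group acts transitively. -/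
def IsIndecomposable : Prop := ∀ x y : X, ∃ g ∈ R.innerGroup, g x = y

/-- A subrack: a nonempty subset closed under the operation which is itself a rack
under the restricted operation. -/
def IsSubrack (Y : Set X) : Prop :=
  Y.Nonempty ∧ (∀ x ∈ Y, ∀ y ∈ Y, R.act x y ∈ Y) ∧
    ∀ x ∈ Y, ∀ y ∈ Y, ∃ z ∈ Y, R.act x z = y

/-- The first Hurwitz braid `σ₁(x,y,z) = (x ▷ y, x, z)`. -/
noncomputable def sigma1 : Equiv.Perm (X × X × X) :=
  Equiv.ofBijective (fun p => (R.act p.1 p.2.1, p.1, p.2.2)) (by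
    constructor
    · rintro ⟨a, b, c⟩ ⟨a', b', c'⟩ h
      simp only [Prod.mk.injEq] at h
      obtain ⟨h1, rfl, rfl⟩ := h
      obtain rfl := (R.act_bijective a).1 h1
      rfl
    · rintro ⟨u, v, w⟩
      refine ⟨(v, (R.phi v).symm u, w), ?_⟩
      have h : R.act v ((R.phi v).symm u) = u := (R.phi v).apply_symm_apply u
      simp [h])

/-- The second Hurwitz braid `σ₂(x,y,z) = (x, y ▷ z, y)`. -/
noncomputable def sigma2 : Equiv.Perm (X × X × X) :=
  Equiv.ofBijective (fun p => (p.1, R.act p.2.1 p.2.2, p.2.1)) (by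
    constructor
    · rintro ⟨a, b, c⟩ ⟨a', b', c'⟩ h
      simp only [Prod.mk.injEq] at h
      obtain ⟨rfl, h1, rfl⟩ := h
      obtain rfl := (R.act_bijective b).1 h1
      rfl
    · rintro ⟨u, v, w⟩
      refine ⟨(u, w, (R.phi w).symm v), ?_⟩
      have h : R.act w ((R.phi w).symm v) = v := (R.phi w).apply_symm_apply v
      simp [h])

/-- The subgroup of the symmetric group of `X³` generated by the two Hurwitz braids. -/
def hurwitzGroup : Subgroup (Equiv.Perm (X × X × X)) :=
  Subgroup.closure {R.sigma1, R.sigma2}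

/-- The Hurwitz orbit of a triple. -/
def hurwitzOrbit (p : X × X × X) : Set (X × X × X) :=
  {q | ∃ g ∈ R.hurwitzGroup, g p = q}

/-- A subset of `X³` is a Hurwitz orbit if it is the Hurwitz orbit of some triple. -/
def IsHurwitzOrbit (O : Set (X × X × X)) : Prop := ∃ p, O = R.hurwitzOrbit p

/-- A quarantine of a Hurwitz orbit `O`: a nonempty subset `Q ⊆ O` such that for every
triple `(x,y,z) ∈ O`, if two of `(x,y,z)`, `(x, y▷z, y)`, `(x▷(y▷z), x, y)` lie in `Q`
then so does the third. -/
def IsQuarantine (O Q : Set (X × X × X)) : Prop :=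
  Q.Nonempty ∧ Q ⊆ O ∧ ∀ p ∈ O,
    ((p ∈ Q ∧ R.sigma2 p ∈ Q) → R.sigma1 (R.sigma2 p) ∈ Q) ∧
    ((p ∈ Q ∧ R.sigma1 (R.sigma2 p) ∈ Q) → R.sigma2 p ∈ Q) ∧
    ((R.sigma2 p ∈ Q ∧ R.sigma1 (R.sigma2 p) ∈ Q) → p ∈ Q)

/-- A plague of a Hurwitz orbit `O`: a subset `P ⊆ O` whose smallest containing
quarantine is `O` itself. -/
def IsPlague (O P : Set (X × X × X)) : Prop :=
  P.Nonempty ∧ P ⊆ O ∧ ∀ Q, R.IsQuarantine O Q → P ⊆ Q → Q = O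

/-- Two racks are isomorphic if there is a bijection respecting the operations. -/
def IsIsomorphic {Y : Type*} (S : Rack' Y) : Prop :=
  ∃ f : X ≃ Y, ∀ a b, f (R.act a b) = S.act (f a) (f b)

end Rack'

/-- Let `X` be a braided rack and `x, y, z ∈ X` with `x ▷ y = z` and `z ≠ y`.
Then `y ▷ z = x` and `z ▷ x = y`. -/
theorem braided_rack_three_cycle {X : Type*} (R : Rack' X) (hR : R.IsBraided)
    (x y z : X) (h1 : R.act x y = z) (h2 : z ≠ y) :
    R.act y z = x ∧ R.act z x = y := by
  obtain ⟨hq, hb⟩ := hR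
  have hyzx : R.act y z = x := by
    rcases hb y x with h | h
    · rw [h1] at h; exact h
    · -- y ▷ x = x
      exfalso
      rcases hb x y with h' | h'
      · rw [h] at h'
        have hxy : x = y := by rw [← hq x, h']
        apply h2
        rw [← h1, hxy, hq]
      · exact h2 (h1 ▸ h')
  refine ⟨hyzx, ?_⟩
  rcases hb z y with h | h
  · rw [hyzx] at h; exact h
  · -- z ▷ y = y
    exfalso
    have := R.self_distrib y z y
    rw [h, hq, hyzx, h1] at this
    exact h2 this.symm
end

section
/- Let X be a braided rack and let x, y ∈ X. (1) If y ▷ x = x then x ▷ y = y. (2) If x ▷ (y ▷ x) = y then y ▷ (x ▷ y) = x. -/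
/-- Let `X` be a braided rack and `x, y ∈ X`.
(1) If `y ▷ x = x` then `x ▷ y = y`.
(2) If `x ▷ (y ▷ x) = y` then `y ▷ (x ▷ y) = x`. -/
theorem braided_rack_crossed {X : Type*} (R : Rack' X) (hR : R.IsBraided) (x y : X) :
    (R.act y x = x → R.act x y = y) ∧
    (R.act x (R.act y x) = y → R.act y (R.act x y) = x) := by
  obtain ⟨hq, hb⟩ := hR
  constructor
  · intro h
    rcases hb x y with h1 | h1
    · rw [h, hq x] at h1
      subst h1; exact hq x
    · exact h1
  · intro h
    rcases hb y x with h1 | h1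
    · exact h1
    · rw [h1, hq x] at h
      subst h; rw [hq]; exact h1
end

section
/- Every indecomposable braided rack is faithful, i.e., if X is a braided rack whose inner group acts transitively on X, then the map x ↦ φ_x from X to the symmetric group of X is injective. -/
/-!
If `φ_x = φ_y` with `x ≠ y`, braidedness forces `z ▷ x = x` or `z ▷ y = y` for every `z`, so
in either case `φ_z` commutes with `φ_x = φ_y`: thus `φ_x` is central in `Inn(X)`. Since
`φ_{g u} = g φ_u g⁻¹` for `g ∈ Inn(X)`, transitivity makes `φ` constant, and in a quandle a
constant `φ` is trivial (`φ_x u = φ_u u = u`). Then `Inn(X)` is trivial and transitivity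
forces `x = y`.
-/

namespace Rack'

variable {X : Type*} {R : Rack' X}

theorem phi_act (x y : X) : R.phi (R.act x y) = R.phi x * R.phi y * (R.phi x)⁻¹ := by
  rw [eq_mul_inv_iff_mul_eq]
  ext w
  exact (R.self_distrib x y w).symm

theorem phi_apply_of_mem_innerGroup {g : Equiv.Perm X} (hg : g ∈ R.innerGroup) (u : X) :
    R.phi (g u) = g * R.phi u * g⁻¹ := by
  induction hg using Subgroup.closure_induction generalizing u with
  | mem _ hz =>
    obtain ⟨z, rfl⟩ := hz
    exact phi_act z u
  | one => simp
  | mul a b _ _ ha hb =>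
    rw [Equiv.Perm.mul_apply, ha, hb]
    group
  | inv a _ ha =>
    obtain ⟨v, rfl⟩ := a.surjective u
    rw [ha v, Equiv.Perm.coe_inv, Equiv.symm_apply_apply]
    group

theorem commute_phi_of_phi_eq (hR : R.IsBraided) {x y : X} (hxy : R.phi x = R.phi y)
    (hne : x ≠ y) (z : X) : Commute (R.phi z) (R.phi x) := by
  have hfix : R.act z x = x ∨ R.act z y = y := by
    by_contra! h
    have hzx := (hR.2 z x).resolve_right h.1
    have hzy := (hR.2 z y).resolve_right h.2
    have hxz : R.act x z = R.act y z := by rw [← phi_apply, hxy, phi_apply]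
    exact hne (by rw [← hzx, hxz, hzy])
  have hconj : R.phi z * R.phi x * (R.phi z)⁻¹ = R.phi x := by
    rcases hfix with h | h
    · rw [← phi_act, h]
    · rw [hxy, ← phi_act, h]
  exact mul_inv_eq_iff_eq_mul.mp hconj

theorem IsIndecomposable.phi_eq_of_commute (hInd : R.IsIndecomposable) {x : X}
    (hx : ∀ z, Commute (R.phi z) (R.phi x)) (u : X) : R.phi u = R.phi x := by
  obtain ⟨g, hg, rfl⟩ := hInd x u
  have hcent : R.innerGroup ≤ Subgroup.centralizer {R.phi x} := by
    rw [innerGroup, Subgroup.closure_le]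
    rintro _ ⟨z, rfl⟩
    exact Subgroup.mem_centralizer_singleton_iff.mpr (hx z).eq
  have hgx : g * R.phi x = R.phi x * g := Subgroup.mem_centralizer_singleton_iff.mp (hcent hg)
  rw [phi_apply_of_mem_innerGroup hg, hgx, mul_inv_cancel_right]

theorem IsQuandle.phi_eq_one_of_phi_eq (hQ : R.IsQuandle) {x : X}
    (hconst : ∀ u, R.phi u = R.phi x) (u : X) : R.phi u = 1 := by
  ext v
  rw [hconst u, ← hconst v, phi_apply, hQ v, Equiv.Perm.one_apply]

theorem innerGroup_eq_bot_iff : R.innerGroup = ⊥ ↔ ∀ x, R.phi x = 1 := by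
  simp [innerGroup, Subgroup.closure_eq_bot_iff]

theorem IsIndecomposable.subsingleton (hInd : R.IsIndecomposable) (hbot : R.innerGroup = ⊥) :
    Subsingleton X := by
  refine ⟨fun x y => ?_⟩
  obtain ⟨g, hg, rfl⟩ := hInd x y
  rw [hbot, Subgroup.mem_bot] at hg
  rw [hg, Equiv.Perm.one_apply]

end Rack'

/-- Every indecomposable braided rack is faithful: the map `x ↦ φ_x` is injective. -/
theorem braided_indecomposable_faithful {X : Type*} (R : Rack' X)
    (hR : R.IsBraided) (hInd : R.IsIndecomposable) :
    Function.Injective R.phi := by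
  intro x y hxy
  by_contra hne
  have hconst := hInd.phi_eq_of_commute (Rack'.commute_phi_of_phi_eq hR hxy hne)
  have hbot : R.innerGroup = ⊥ :=
    Rack'.innerGroup_eq_bot_iff.mpr (hR.1.phi_eq_one_of_phi_eq hconst)
  exact hne ((hInd.subsingleton hbot).elim x y)
end

section
/- Let X be a finite braided indecomposable rack. Then X has degree 1, 2, 3, 4 or 6; that is, for every x ∈ X the order of the permutation φ_x is 1, 2, 3, 4 or 6. -/
namespace Equiv.Perm

variable {α : Type*}

theorem pow_apply_pow_apply (f : Perm α) (m n : ℕ) (p : α) :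
    (f ^ m) ((f ^ n) p) = (f ^ (m + n)) p := by
  rw [pow_add, mul_apply]

theorem pow_apply_eq_pow_mod_apply {f : Perm α} {k : ℕ} {p : α} (h : (f ^ k) p = p)
    (n : ℕ) : (f ^ n) p = (f ^ (n % k)) p :=
  (Function.IsPeriodicPt.iterate_mod_apply h n).symm

theorem pow_apply_ne_of_apply_ne {f : Perm α} {x v : α} (hx : f x = x) (hv : f v ≠ v)
    (n : ℕ) : (f ^ n) v ≠ x := fun h =>
  hv ((apply_pow_apply_eq_iff f n).1 (by rw [h, hx]))

theorem pow_add_apply_eq_pow_apply_iff (f : Perm α) (m n : ℕ) (p q : α) :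
    (f ^ (m + n)) p = (f ^ m) q ↔ (f ^ n) p = q := by
  rw [← pow_apply_pow_apply, EmbeddingLike.apply_eq_iff_eq]

end Equiv.Perm

theorem mul_mul_pow_of_braid {M : Type*} [Monoid M] {a b : M} (h : a * b * a = b * a * b)
    (n : ℕ) : a * b * a ^ n = b ^ n * a * b := by
  induction n with
  | zero => simp
  | succ n ih =>
    calc a * b * a ^ (n + 1) = a * b * a ^ n * a := by rw [pow_succ]; simp only [mul_assoc]
      _ = b ^ n * (a * b * a) := by rw [ih]; simp only [mul_assoc]
      _ = b ^ (n + 1) * a * b := by rw [h, pow_succ]; simp only [mul_assoc]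

open Equiv.Perm

namespace Rack'

variable {X : Type*} (R : Rack' X)

theorem phi_pow_act (x a b : X) (n : ℕ) :
    (R.phi x ^ n) (R.act a b) = R.act ((R.phi x ^ n) a) ((R.phi x ^ n) b) := by
  induction n with
  | zero => rfl
  | succ n ih => rw [pow_succ', mul_apply, ih, phi_apply, R.self_distrib]; rfl

theorem phi_act_mul_phi (a b : X) : R.phi (R.act a b) * R.phi a = R.phi a * R.phi b := by
  ext c
  exact (R.self_distrib a b c).symm

theorem commute_phi_of_phi_apply_eq_self {a b : X} (h : R.phi a b = b) :
    Commute (R.phi a) (R.phi b) := by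
  have := R.phi_act_mul_phi a b
  rw [show R.act a b = b from h] at this
  exact this.symm

theorem phi_pow_apply_apply_eq {x a b c : X} {n : ℕ} (h : (R.phi x ^ n) c = b) :
    R.phi ((R.phi x ^ n) a) b = (R.phi x ^ n) (R.phi a c) :=
  h ▸ (R.phi_pow_act x a c n).symm

theorem phi_mul_phi_mul_phi_of_braid {a b : X} (h : R.phi a (R.phi b a) = b) :
    R.phi a * R.phi b * R.phi a = R.phi b * R.phi a * R.phi b := by
  have hb : R.phi b * R.phi a = R.phi a * R.phi (R.act b a) := by
    simpa only [show R.act a (R.act b a) = b from h] using R.phi_act_mul_phi a (R.act b a)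
  calc R.phi a * R.phi b * R.phi a = R.phi a * (R.phi (R.act b a) * R.phi b) := by
        rw [R.phi_act_mul_phi b a, mul_assoc]
    _ = R.phi b * R.phi a * R.phi b := by rw [← mul_assoc, ← hb]

theorem phi_phi_pow_apply_of_braid {x a : X} (h : R.phi x (R.phi a x) = a) (n : ℕ) (p : X) :
    R.phi x (R.phi a ((R.phi x ^ n) p)) = (R.phi a ^ n) (R.phi x (R.phi a p)) :=
  DFunLike.congr_fun (mul_mul_pow_of_braid (R.phi_mul_phi_mul_phi_of_braid h) n) p

theorem pow_apply_phi_apply_eq_of_phi_apply_eq_self {x z v : X} (h : R.phi x (R.phi z x) = z)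
    (hzv : R.phi z v = v) {n : ℕ} (hn : R.phi z ((R.phi x ^ n) v) = (R.phi x ^ n) v) :
    (R.phi z ^ n) (R.phi x v) = (R.phi x ^ (n + 1)) v := by
  have key := R.phi_phi_pow_apply_of_braid h n v
  rw [hn, hzv] at key
  rw [← key, ← mul_apply, ← pow_succ']

namespace IsBraided

variable {R} (hR : R.IsBraided)
include hR

theorem phi_apply_eq_self_symm {a b : X} (h : R.phi a b = b) : R.phi b a = a := by
  rcases hR.2 b a with h' | h'
  · rw [show R.act a b = b from h, hR.1 b] at h'
    rw [← h', phi_apply, hR.1]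
  · exact h'

theorem braid_of_phi_apply_ne {a b : X} (h : R.phi a b ≠ b) :
    R.phi a (R.phi b a) = b ∧ R.phi b (R.phi a b) = a := by
  refine ⟨(hR.2 a b).resolve_right h, (hR.2 b a).resolve_right fun h' => h ?_⟩
  exact hR.phi_apply_eq_self_symm h'

theorem phi_apply_eq_pow_apply {x z : X} (h : R.phi x z ≠ z) {k : ℕ}
    (hk : (R.phi x ^ (k + 1)) z = z) : R.phi z x = (R.phi x ^ k) z := by
  apply (R.phi x).injective
  rw [(hR.braid_of_phi_apply_ne h).1, ← mul_apply, ← pow_succ', hk]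

theorem pow_four_apply_eq_self_or_pow_six_apply_eq_self (a b : X) :
    (R.phi a ^ 4) b = b ∨ (R.phi a ^ 6) b = b := by
  by_cases hab : R.phi a b = b
  · exact Or.inl (pow_apply_eq_self_of_apply_eq_self hab 4)
  obtain ⟨h₁, h₂⟩ := hR.braid_of_phi_apply_ne hab
  set c := (R.phi a ^ 2) b with hc
  have hbc : (R.phi a ^ 2) (R.phi b c) = b := by
    have key : R.phi a (R.phi b c) = R.phi b a := by
      have := R.phi_phi_pow_apply_of_braid h₁ 2 b
      rwa [R.phi_apply b b, hR.1 b, pow_two (R.phi b), mul_apply, h₂] at this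
    rw [pow_two, mul_apply, key, h₁]
  by_cases hcb : R.phi b c = c
  · left
    rw [show 4 = 2 + 2 from rfl, ← pow_apply_pow_apply, ← hc, ← hcb, hbc]
  · right
    have hcs : R.phi c ((R.phi a ^ 2) c) = b := (R.phi_pow_act a b c 2).symm.trans hbc
    have hbc' : R.phi b c = (R.phi a ^ 2) c :=
      (R.phi c).injective ((hR.braid_of_phi_apply_ne hcb).2.trans hcs.symm)
    rw [show 6 = 2 + (2 + 2) from rfl, ← pow_apply_pow_apply, ← pow_apply_pow_apply, ← hc,
      ← hbc', hbc]

theorem pow_apply_phi_apply_eq_of_pow_apply_eq_self {x z v : X} (hxv : R.phi x v ≠ v)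
    (hzv : R.phi z v ≠ v) {n : ℕ} (hn : (R.phi x ^ n) v = v) :
    (R.phi v ^ n) (R.phi x z) = (R.phi x ^ (n + 1)) z := by
  have hcv : R.phi ((R.phi x ^ n) z) v = (R.phi x ^ n) (R.phi z v) := by
    conv_lhs => rw [← hn]
    exact (R.phi_pow_act x z v n).symm
  have hcv_ne : R.phi ((R.phi x ^ n) z) v ≠ v := by
    rw [hcv]
    conv_rhs => rw [← hn]
    exact fun h => hzv ((R.phi x ^ n).injective h)
  have key := R.phi_phi_pow_apply_of_braid (hR.braid_of_phi_apply_ne hxv).1 n (R.phi z v)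
  rw [← hcv, (hR.braid_of_phi_apply_ne hcv_ne).2, (hR.braid_of_phi_apply_ne hzv).2] at key
  rw [← key, ← mul_apply, ← pow_succ']

theorem phi_apply_phi_apply_eq_of_phi_phi_apply_eq {x z v t : X}
    (hw : R.phi v (R.phi x z) ≠ R.phi x z) (ht : R.phi x (R.phi z t) = v) :
    R.phi v (R.phi x z) = R.phi x t := by
  apply (R.phi (R.phi x z)).injective
  rw [(hR.braid_of_phi_apply_ne hw).2, ← ht]
  exact R.self_distrib x z t

theorem phi_pow_apply_eq_self_of_phi_apply_eq_self {x z v : X} (hzv : R.phi z v = v) {n : ℕ}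
    (hn : (R.phi x ^ n) z = z) : R.phi z ((R.phi x ^ n) v) = (R.phi x ^ n) v :=
  hR.phi_apply_eq_self_symm (by
    rw [R.phi_pow_apply_apply_eq hn, hR.phi_apply_eq_self_symm hzv, hn])

theorem pow_apply_phi_apply_of_period_four {x z v : X}
    (hz4 : (R.phi x ^ 4) z = z) (hz2 : (R.phi x ^ 2) z ≠ z) (hv6 : (R.phi x ^ 6) v = v)
    (hxv : R.phi x v ≠ v) (hzv : R.phi z v ≠ v) :
    (R.phi v ^ 2) (R.phi x z) = (R.phi x ^ 3) z ∧ (R.phi v ^ 4) (R.phi x z) = R.phi x z := by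
  have hw6 : (R.phi v ^ 6) (R.phi x z) = (R.phi x ^ 3) z := by
    rw [hR.pow_apply_phi_apply_eq_of_pow_apply_eq_self hxv hzv hv6,
      pow_apply_eq_pow_mod_apply hz4]
  have hw4 : (R.phi v ^ 4) (R.phi x z) = R.phi x z :=
    (hR.pow_four_apply_eq_self_or_pow_six_apply_eq_self v _).resolve_right fun h =>
      hz2 ((pow_add_apply_eq_pow_apply_iff _ 1 2 z z).1 (hw6.symm.trans h))
  refine ⟨?_, hw4⟩
  rw [← hw6, show 6 = 2 + 4 from rfl, pow_add, mul_apply, hw4]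

theorem pow_apply_phi_apply_of_period_three_or_six {x z v : X}
    (hz4 : (R.phi x ^ 4) z = z) (hz2 : (R.phi x ^ 2) z ≠ z)
    (hv6 : (R.phi x ^ 6) v = v) (hv2 : (R.phi x ^ 2) v ≠ v) :
    (R.phi z ^ 2) (R.phi x v) = (R.phi x ^ 3) v ∧
      (R.phi z ^ 4) (R.phi x v) = (R.phi x ^ 5) v := by
  have hxz : R.phi x z ≠ z := fun h => hz2 (pow_apply_eq_self_of_apply_eq_self h 2)
  have hz8 : (R.phi x ^ 8) z = z := by rw [pow_apply_eq_pow_mod_apply hz4]; rfl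
  by_cases hzv : R.phi z v = v
  · have hxz' := (hR.braid_of_phi_apply_ne hxz).1
    refine ⟨R.pow_apply_phi_apply_eq_of_phi_apply_eq_self hxz' hzv ?_,
      R.pow_apply_phi_apply_eq_of_phi_apply_eq_self hxz' hzv
        (hR.phi_pow_apply_eq_self_of_phi_apply_eq_self hzv hz4)⟩
    have h := hR.phi_pow_apply_eq_self_of_phi_apply_eq_self hzv hz8
    rwa [pow_apply_eq_pow_mod_apply hv6] at h
  have hvz : R.phi v z ≠ z := fun h => hzv (hR.phi_apply_eq_self_symm h)
  have hu4 := hR.pow_apply_phi_apply_eq_of_pow_apply_eq_self hxz hvz hz4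
  have hu8 : (R.phi z ^ 8) (R.phi x v) = (R.phi x ^ 3) v := by
    rw [hR.pow_apply_phi_apply_eq_of_pow_apply_eq_self hxz hvz hz8,
      pow_apply_eq_pow_mod_apply hv6]
  have hv4 : (R.phi x ^ 4) v ≠ v := fun h => hv2 (by
    have h24 := pow_apply_pow_apply (R.phi x) 2 4 v
    rw [h] at h24
    exact h24.trans hv6)
  have hu6 : (R.phi z ^ 6) (R.phi x v) = R.phi x v :=
    (hR.pow_four_apply_eq_self_or_pow_six_apply_eq_self z _).resolve_left fun h =>
      hv4 ((pow_add_apply_eq_pow_apply_iff _ 1 4 v v).1 (hu4.symm.trans h))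
  refine ⟨?_, hu4⟩
  rw [← hu8, show 8 = 2 + 6 from rfl, pow_add, mul_apply, hu6]

theorem phi_apply_ne_of_period_four_of_period_three_or_six {x z v : X}
    (hz4 : (R.phi x ^ 4) z = z) (hz2 : (R.phi x ^ 2) z ≠ z)
    (hv6 : (R.phi x ^ 6) v = v) (hv2 : (R.phi x ^ 2) v ≠ v) :
    R.phi z v ≠ v := by
  intro hzv
  have hxz : R.phi x z ≠ z := fun h => hz2 (pow_apply_eq_self_of_apply_eq_self h 2)
  have hxv : R.phi x v ≠ v := fun h => hv2 (pow_apply_eq_self_of_apply_eq_self h 2)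
  have hcomm : ∀ p, R.phi z (R.phi v p) = R.phi v (R.phi z p) :=
    DFunLike.congr_fun (R.commute_phi_of_phi_apply_eq_self hzv)
  obtain ⟨hu2, hu4⟩ := hR.pow_apply_phi_apply_of_period_three_or_six hz4 hz2 hv6 hv2
  set t := (R.phi z ^ 3) (R.phi x v)
  have ht3 : R.phi z ((R.phi x ^ 3) v) = t := by rw [← hu2, ← mul_apply, ← pow_succ']
  have ht5 : R.phi z t = (R.phi x ^ 5) v := by rw [← hu4, ← mul_apply, ← pow_succ']
  have hsut : R.phi x (R.phi z t) = v := by rw [ht5, ← mul_apply, ← pow_succ', hv6]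
  have hw1 : R.phi v (R.phi x z) = t := (R.phi z).injective (by
    rw [hcomm, (hR.braid_of_phi_apply_ne hxz).2, hR.phi_apply_eq_pow_apply hxv hv6, ht5])
  have hst : R.phi x t = t := by
    refine (hR.phi_apply_phi_apply_eq_of_phi_phi_apply_eq (fun h => ?_) hsut).symm.trans hw1
    refine pow_apply_ne_of_apply_ne (hR.1 x) hxv 5 ?_
    rw [← ht5, ← hw1, h, (hR.braid_of_phi_apply_ne hxz).2]
  have hz3v : R.phi ((R.phi x ^ 3) z) v = t := by
    rw [R.phi_pow_apply_apply_eq (c := (R.phi x ^ 3) v) (by rw [pow_apply_pow_apply]; exact hv6),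
      ht3, pow_apply_eq_self_of_apply_eq_self hst]
  have hwt : R.phi v t = (R.phi x ^ 3) z := by
    have hne : R.phi ((R.phi x ^ 3) z) v ≠ v := by rw [hz3v]; exact fun h => hxv (h ▸ hst)
    simpa only [hz3v] using (hR.braid_of_phi_apply_ne hne).2
  have hut : R.phi z (R.phi x v) = t := (R.phi v).injective (by
    rw [← hcomm, (hR.braid_of_phi_apply_ne hxv).2, hR.phi_apply_eq_pow_apply hxz hz4, hwt])
  have h : (R.phi z ^ 2) (R.phi x v) = R.phi x v :=
    (R.phi z).injective (by rw [hut, ← mul_apply, ← pow_succ'])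
  exact hv2 ((pow_add_apply_eq_pow_apply_iff _ 1 2 v v).1 (hu2.symm.trans h))

theorem phi_apply_eq_of_period_four_of_period_three_or_six {x z v : X}
    (hz4 : (R.phi x ^ 4) z = z) (hz2 : (R.phi x ^ 2) z ≠ z)
    (hv6 : (R.phi x ^ 6) v = v) (hv2 : (R.phi x ^ 2) v ≠ v) :
    R.phi z v = v := by
  by_contra hzv
  have hxv : R.phi x v ≠ v := fun h => hv2 (pow_apply_eq_self_of_apply_eq_self h 2)
  have hv5 : (R.phi x ^ 5) v ≠ (R.phi x ^ 3) v := fun h =>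
    hv2 ((pow_add_apply_eq_pow_apply_iff _ 3 2 v v).1 h)
  have hz3 : (R.phi x ^ 3) z ≠ R.phi x z := fun h =>
    hz2 ((pow_add_apply_eq_pow_apply_iff _ 1 2 z z).1 h)
  obtain ⟨hw2, hw4⟩ := hR.pow_apply_phi_apply_of_period_four hz4 hz2 hv6 hxv hzv
  obtain ⟨hu2, hu4⟩ := hR.pow_apply_phi_apply_of_period_three_or_six hz4 hz2 hv6 hv2
  set t := (R.phi z ^ 3) (R.phi x v)
  have ht3 : R.phi z ((R.phi x ^ 3) v) = t := by rw [← hu2, ← mul_apply, ← pow_succ']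
  have ht5 : R.phi z t = (R.phi x ^ 5) v := by rw [← hu4, ← mul_apply, ← pow_succ']
  have hsut : R.phi x (R.phi z t) = v := by rw [ht5, ← mul_apply, ← pow_succ', hv6]
  have hG : R.phi z ((R.phi x ^ 3) (R.phi v (R.phi x z))) = (R.phi x ^ 3) v := by
    have hne : R.phi z ((R.phi x ^ 3) v) ≠ (R.phi x ^ 3) v := fun h =>
      hv5 (by rw [← ht5, ← ht3, h, h])
    have h3 : (R.phi x ^ 3) (R.phi x z) = z := by rw [← mul_apply, ← pow_succ, hz4]
    simpa only [R.phi_pow_apply_apply_eq h3] using (hR.braid_of_phi_apply_ne hne).1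
  have hw1 : R.phi v (R.phi x z) = R.phi x t := by
    refine hR.phi_apply_phi_apply_eq_of_phi_phi_apply_eq (fun h => hz3 ?_) hsut
    rw [← hw2, pow_two, mul_apply, h, h]
  have hwt : R.phi v ((R.phi x ^ 3) t) = (R.phi x ^ 3) z := by
    have hne : R.phi v ((R.phi x ^ 3) z) ≠ (R.phi x ^ 3) z := fun h => hz3 (by
      rw [← hw4, show 4 = 2 + 2 from rfl, pow_add, mul_apply, hw2, pow_two, mul_apply, h, h])
    have hz3v : R.phi ((R.phi x ^ 3) z) v = (R.phi x ^ 3) t := by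
      rw [R.phi_pow_apply_apply_eq (c := (R.phi x ^ 3) v) (by rw [pow_apply_pow_apply]; exact hv6),
        ht3]
    simpa only [hz3v] using (hR.braid_of_phi_apply_ne hne).1
  have hs2t : (R.phi x ^ 2) t = t := by
    refine (pow_add_apply_eq_pow_apply_iff _ 1 2 t t).1 ((R.phi v).injective ?_)
    rw [hwt, ← hw2, pow_two, mul_apply, hw1]
    rfl
  have hs4t : (R.phi x ^ 3) (R.phi x t) = t := by
    rw [← mul_apply, ← pow_succ, pow_apply_eq_pow_mod_apply hs2t]
    rfl
  rw [hw1, hs4t] at hG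
  exact hv5 (ht5.symm.trans hG)

theorem phi_pow_four_eq_one_or_phi_pow_six_eq_one (x : X) :
    R.phi x ^ 4 = 1 ∨ R.phi x ^ 6 = 1 := by
  by_contra! h
  obtain ⟨a, ha⟩ : ∃ a, (R.phi x ^ 6) a ≠ a := by
    by_contra! h'
    exact h.2 (Equiv.ext h')
  obtain ⟨b, hb⟩ : ∃ b, (R.phi x ^ 4) b ≠ b := by
    by_contra! h'
    exact h.1 (Equiv.ext h')
  have ha4 := (hR.pow_four_apply_eq_self_or_pow_six_apply_eq_self x a).resolve_right ha
  have hb6 := (hR.pow_four_apply_eq_self_or_pow_six_apply_eq_self x b).resolve_left hb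
  have ha2 : (R.phi x ^ 2) a ≠ a := fun h => ha (Function.IsPeriodicPt.mul_const h 3)
  have hb2 : (R.phi x ^ 2) b ≠ b := fun h => hb (Function.IsPeriodicPt.mul_const h 2)
  exact hR.phi_apply_ne_of_period_four_of_period_three_or_six ha4 ha2 hb6 hb2
    (hR.phi_apply_eq_of_period_four_of_period_three_or_six ha4 ha2 hb6 hb2)

end IsBraided

end Rack'

theorem braided_rack_degree_general {X : Type*} (R : Rack' X)
    (hR : R.IsBraided) (x : X) :
    orderOf (R.phi x) ∈ ({1, 2, 3, 4, 6} : Set ℕ) := by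
  rcases hR.phi_pow_four_eq_one_or_phi_pow_six_eq_one x with h | h <;>
  · have hdvd := orderOf_dvd_of_pow_eq_one h
    have hle := Nat.le_of_dvd (by norm_num) hdvd
    interval_cases orderOf (R.phi x) <;> simp_all

/-- A finite braided indecomposable rack has degree `1`, `2`, `3`, `4` or `6`:
the order of every left translation `φ_x` lies in `{1, 2, 3, 4, 6}`. -/
theorem braided_rack_degree {X : Type*} [Finite X] (R : Rack' X)
    (hR : R.IsBraided) (hInd : R.IsIndecomposable) (x : X) :
    orderOf (R.phi x) ∈ ({1, 2, 3, 4, 6} : Set ℕ) :=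
  braided_rack_degree_general R hR x
end

section
/- Let A be a finite abelian group and let g be an automorphism of A such that 1 − g is injective. Then the affine rack Aff(A, g) is braided if and only if 1 − g + g² = 0 as an endomorphism of A. -/
/-- The affine rack associated to an abelian group `A` and `g ∈ Aut(A)`:
`x ▷ y = (1 - g)(x) + g(y)`. -/
def affineRack (A : Type*) [AddCommGroup A] (g : A ≃+ A) : Rack' A where
  act x y := (x - g x) + g y
  act_bijective x := by
    constructor
    · intro a b h
      exact g.injective (add_left_cancel h)
    · intro b
      exact ⟨g.symm (b - (x - g x)), by simp⟩
  self_distrib x y z := by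
    simp only [map_add, map_sub]
    abel

/-- A subset of a group closed under conjugation is a rack under conjugation. -/
def conjSetRack {G : Type*} [Group G] (D : Set G)
    (hD : ∀ g : G, ∀ x ∈ D, g * x * g⁻¹ ∈ D) : Rack' D where
  act x y := ⟨(x : G) * y * (x : G)⁻¹, hD x y y.2⟩
  act_bijective x := by
    constructor
    · intro a b h
      have h' : (x : G) * a * (x : G)⁻¹ = (x : G) * b * (x : G)⁻¹ :=
        congrArg Subtype.val h
      exact Subtype.ext (mul_left_cancel (mul_right_cancel h'))
    · intro b
      refine ⟨⟨(x : G)⁻¹ * b * x, ?_⟩, ?_⟩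
      · simpa using hD (x : G)⁻¹ b b.2
      · apply Subtype.ext
        show (x : G) * ((x : G)⁻¹ * b * x) * (x : G)⁻¹ = (b : G)
        group
  self_distrib x y z :=
    Subtype.ext (show
      (x : G) * ((y : G) * z * (y : G)⁻¹) * (x : G)⁻¹ =
        ((x : G) * y * (x : G)⁻¹) * ((x : G) * z * (x : G)⁻¹) *
          ((x : G) * y * (x : G)⁻¹)⁻¹ from by group)

/-- The conjugation rack on the conjugacy class of an element `g` of a group. -/
def conjClassRack {G : Type*} [Group G] (g : G) : Rack' {h : G // IsConj g h} :=
  conjSetRack {h : G | IsConj g h} (fun a x hx => hx.trans (isConj_iff.mpr ⟨a, rfl⟩))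

/-- For a finite abelian group `A` and `g ∈ Aut(A)` with `1 - g` injective, the affine
rack `Aff(A, g)` is braided if and only if `1 - g + g² = 0` as an endomorphism of `A`. -/
theorem affineRack_braided_iff {A : Type*} [AddCommGroup A] [Finite A] (g : A ≃+ A)
    (hinj : Function.Injective fun a : A => a - g a) :
    (affineRack A g).IsBraided ↔ ∀ a : A, a - g a + g (g a) = 0 := by
  constructor
  · rintro ⟨hq, hb⟩ a
    rcases hb a 0 with h | h
    · simpa [affineRack, map_add, map_sub, map_zero] using h
    · have ha : a = 0 := by
        apply hinj
        simp only [affineRack, map_zero, add_zero] at h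
        simpa using h
      simp [ha]
  · intro h
    refine ⟨fun x => by simp [affineRack], fun x y => Or.inl ?_⟩
    show x - g x + g (y - g y + g x) = y
    have hx := h x
    have h2 : g y - g (g y) = y := by
      apply eq_of_sub_eq_zero
      calc (g y - g (g y)) - y = -(y - g y + g (g y)) := by abel
        _ = -0 := by rw [h y]
        _ = 0 := neg_zero
    calc x - g x + g (y - g y + g x)
        = (x - g x + g (g x)) + (g y - g (g y)) := by
          rw [map_add, map_sub]; abel
      _ = 0 + (g y - g (g y)) := by rw [hx]
      _ = y := by rw [h2, zero_add]
end

section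
/- For every natural number N there exists a finite braided indecomposable rack X of degree 6 which is generated by two elements as a rack and satisfies #X > N. In particular, there exist infinitely many finite braided indecomposable racks of degree 6 which are generated by two elements. -/
/-- The affine rack on `(ℤ/n)²` with `x ▷ y = (1-t)x + t y`, where `t` is
multiplication by a primitive sixth root of unity, i.e. `t(c,d) = (-d, c+d)`. -/
def affRack (n : ℕ) : Rack' (ZMod n × ZMod n) where
  act x y := (x.1 + x.2 - y.2, y.1 + y.2 - x.1)
  act_bijective x := by
    constructor
    · rintro ⟨c, d⟩ ⟨c', d'⟩ h
      simp only [Prod.mk.injEq] at h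
      obtain ⟨h1, h2⟩ := h
      have hd : d = d' := by linear_combination -h1
      subst hd
      have hc : c = c' := by linear_combination h2
      simp [hc]
    · rintro ⟨u, v⟩
      refine ⟨(v + u - x.2, x.1 + x.2 - u), ?_⟩
      simp only [Prod.mk.injEq]
      constructor <;> ring
  self_distrib := by
    rintro ⟨a, b⟩ ⟨c, d⟩ ⟨e, f⟩
    simp only [Prod.mk.injEq]
    constructor <;> ring

@[simp] theorem affRack_act (n : ℕ) (x y : ZMod n × ZMod n) :
    (affRack n).act x y = (x.1 + x.2 - y.2, y.1 + y.2 - x.1) := rfl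

theorem two_ne_zero_zmod (n : ℕ) (hn : 3 ≤ n) : (2 : ZMod n) ≠ 0 := by
  intro h
  have : ((2 : ℕ) : ZMod n) = 0 := by exact_mod_cast h
  rw [ZMod.natCast_eq_zero_iff] at this
  exact absurd (Nat.le_of_dvd (by norm_num) this) (by omega)

theorem affRack_order_six (n : ℕ) (hn : 3 ≤ n) (x : ZMod n × ZMod n) :
    orderOf ((affRack n).phi x) = 6 := by
  set g := (affRack n).phi x with hg
  have happ : ∀ y, g y = (x.1 + x.2 - y.2, y.1 + y.2 - x.1) := fun y => rfl
  have h2z := two_ne_zero_zmod n hn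
  have h6 : g ^ 6 = 1 := by
    ext y
    all_goals simp only [pow_succ, pow_zero, one_mul, Equiv.Perm.mul_apply,
      Equiv.Perm.one_apply, happ]
    all_goals ring
  have h2 : g ^ 2 ≠ 1 := by
    intro h
    have := Equiv.ext_iff.mp h (x.1 + 1, x.2)
    simp only [pow_succ, pow_zero, one_mul, Equiv.Perm.mul_apply, Equiv.Perm.one_apply, happ] at this
    simp only [Prod.mk.injEq] at this
    apply h2z
    linear_combination - this.1
  have h3 : g ^ 3 ≠ 1 := by
    intro h
    have := Equiv.ext_iff.mp h (x.1 + 1, x.2)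
    simp only [pow_succ, pow_zero, one_mul, Equiv.Perm.mul_apply, Equiv.Perm.one_apply, happ] at this
    simp only [Prod.mk.injEq] at this
    apply h2z
    linear_combination - this.1
  have hdvd : orderOf g ∣ 6 := orderOf_dvd_of_pow_eq_one h6
  have h0 : orderOf g ≠ 0 := by
    intro h; rw [h] at hdvd; exact absurd (Nat.eq_zero_of_zero_dvd hdvd) (by norm_num)
  have hle : orderOf g ≤ 6 := Nat.le_of_dvd (by norm_num) hdvd
  have hge : 1 ≤ orderOf g := Nat.one_le_iff_ne_zero.mpr h0
  interval_cases h : orderOf g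
  · exact absurd (by rw [orderOf_eq_one_iff.mp h]; simp) h2
  · exact absurd (by rw [← h]; exact pow_orderOf_eq_one g) h2
  · exact absurd (by rw [← h]; exact pow_orderOf_eq_one g) h3
  · exact absurd hdvd (by norm_num)
  · exact absurd hdvd (by norm_num)
  · rfl

theorem affRack_gen (n : ℕ) (hn : 3 ≤ n) (S : Set (ZMod n × ZMod n))
    (hS : (affRack n).IsSubrack S)
    (ha : ((0 : ZMod n), (0 : ZMod n)) ∈ S)
    (hb : ((1 : ZMod n), (0 : ZMod n)) ∈ S) : S = Set.univ := by
  haveI : NeZero n := ⟨by omega⟩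
  obtain ⟨-, hcl, hdiv⟩ := hS
  have key : ∀ (p q : ZMod n × ZMod n), q ∈ S → p.1 = q.1 → p.2 = q.2 → p ∈ S := by
    intro p q hq h1 h2
    have : p = q := Prod.ext h1 h2
    rw [this]; exact hq
  have hinv : ∀ x ∈ S, ∀ y ∈ S, ((y.1 + y.2 - x.2 : ZMod n), x.1 + x.2 - y.1) ∈ S := by
    intro x hx y hy
    obtain ⟨z, hz, heq⟩ := hdiv x hx y hy
    obtain ⟨c, d⟩ := z
    rw [Prod.ext_iff] at heq
    simp only [affRack_act] at heq
    obtain ⟨h1, h2⟩ := heq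
    have hc : c = y.1 + y.2 - x.2 := by linear_combination h1 + h2
    have hd : d = x.1 + x.2 - y.1 := by linear_combination - h1
    exact key _ _ hz (by rw [hc]) (by rw [hd])
  have hrot : ∀ y ∈ S, ((-y.2 : ZMod n), y.1 + y.2) ∈ S := by
    intro y hy
    refine key _ _ (hcl _ ha y hy) ?_ ?_ <;> simp [affRack_act]
  have hneg : ∀ y ∈ S, ((-y.1 : ZMod n), -y.2) ∈ S := by
    intro y hy
    refine key _ _ (hrot _ (hrot _ (hrot y hy))) ?_ ?_ <;> simp <;> ring
  have hdec2 : ∀ y ∈ S, ((y.1 : ZMod n), y.2 - 1) ∈ S := by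
    intro y hy
    refine key _ _ (hinv _ ha _ (hcl _ hb y hy)) ?_ ?_ <;> simp [affRack_act] <;> ring
  have hinc2 : ∀ y ∈ S, ((y.1 : ZMod n), y.2 + 1) ∈ S := by
    intro y hy
    refine key _ _ (hneg _ (hdec2 _ (hneg y hy))) ?_ ?_ <;> simp <;> ring
  have hdec1 : ∀ y ∈ S, ((y.1 - 1 : ZMod n), y.2) ∈ S := by
    intro y hy
    refine key _ _ (hdec2 _ (hrot _ (hinv _ hb y hy))) ?_ ?_ <;> simp [affRack_act] <;> ring
  have hinc1 : ∀ y ∈ S, ((y.1 + 1 : ZMod n), y.2) ∈ S := by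
    intro y hy
    refine key _ _ (hneg _ (hdec1 _ (hneg y hy))) ?_ ?_ <;> simp <;> ring
  have hnat : ∀ k m : ℕ, ((k : ZMod n), (m : ZMod n)) ∈ S := by
    intro k
    induction k with
    | zero =>
      intro m
      induction m with
      | zero => simpa using ha
      | succ m ih =>
        refine key _ _ (hinc2 _ ih) ?_ ?_ <;> simp <;> push_cast <;> ring
    | succ k ih =>
      intro m
      refine key _ _ (hinc1 _ (ih m)) ?_ ?_ <;> simp <;> push_cast <;> ring
  ext p
  simp only [Set.mem_univ, iff_true]
  obtain ⟨c, d⟩ := p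
  have hc : ((c.val : ℕ) : ZMod n) = c := ZMod.natCast_zmod_val c
  have hd : ((d.val : ℕ) : ZMod n) = d := ZMod.natCast_zmod_val d
  refine key _ _ (hnat c.val d.val) (by simpa using hc.symm) (by simpa using hd.symm)

/-- For every `N` there exists a finite braided indecomposable rack of degree `6`,
generated by two elements, with more than `N` elements. -/
theorem exists_large_braided_rack_degree_six (N : ℕ) :
    ∃ (X : Type) (R : Rack' X), Finite X ∧ R.IsBraided ∧ R.IsIndecomposable ∧
      (∀ x : X, orderOf (R.phi x) = 6) ∧
      (∃ a b : X, ∀ S : Set X, R.IsSubrack S → a ∈ S → b ∈ S → S = Set.univ) ∧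
      N < Nat.card X := by
  refine ⟨ZMod (N + 3) × ZMod (N + 3), affRack (N + 3), inferInstance, ?_, ?_, ?_, ?_, ?_⟩
  · constructor
    · rintro ⟨a, b⟩
      simp only [affRack_act, Prod.mk.injEq]
      constructor <;> ring
    · rintro ⟨a, b⟩ ⟨c, d⟩
      left
      simp only [affRack_act, Prod.mk.injEq]
      constructor <;> ring
  · intro x y
    refine ⟨(affRack (N + 3)).phi (x.1 + x.2 - y.2, y.1 + y.2 - x.1),
      Subgroup.subset_closure ⟨_, rfl⟩, ?_⟩
    rw [Rack'.phi_apply, affRack_act]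
    obtain ⟨a, b⟩ := x
    obtain ⟨c, d⟩ := y
    simp only [Prod.mk.injEq]
    constructor <;> ring
  · exact fun x => affRack_order_six _ (by omega) x
  · refine ⟨⟨(0 : ZMod (N + 3)), (0 : ZMod (N + 3))⟩, ⟨(1 : ZMod (N + 3)), (0 : ZMod (N + 3))⟩,
      fun S hS ha hb => affRack_gen _ (by omega) S hS ha hb⟩
  · rw [Nat.card_prod, Nat.card_zmod]
    nlinarith
end

section
/- Let (G, D) be a 3-transposition group with D finite, and assume that D is an indecomposable rack under conjugation. Let Y ⊆ D be a minimal subset generating D as a rack (i.e., the smallest subrack of D containing Y is D, and no proper subset of Y has this property). Then the graph 𝒢(Y) with vertex set Y, in which distinct x, y ∈ Y are adjacent if and only if the order of xy in G is 3, is connected. -/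
/-!
Conjugation by an involution is an involution of `D`, so every nonempty subset of `D` closed
under conjugation by its own elements is a subrack, and the inner group is generated by
involutions. If the graph were disconnected, split `Y = A ∪ B` with `A` the component of a
vertex: for involutions `x, y` with `ord(xy) ∈ {1, 2}` we get `xy = (xy)⁻¹ = yx`, so `A` and `B`
commute elementwise. Commuting is preserved when closing up, so `D` is the union of two
commuting subracks `⟨A⟩` and `⟨B⟩`. Every `φ_x` then maps `⟨A⟩` into itself, hence
`⟨A⟩ = D` by indecomposability, and minimality of `Y` forces `B = ∅`.
-/

namespace Rack'

variable {X : Type*} (R : Rack' X)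

def IsInvolutory : Prop := ∀ x y, R.act x (R.act x y) = y

def IsActClosed (S : Set X) : Prop := ∀ x ∈ S, ∀ y ∈ S, R.act x y ∈ S

def Generates (Y : Set X) : Prop := ∀ S, R.IsSubrack S → Y ⊆ S → S = Set.univ

def Commutes (a b : X) : Prop := R.act a b = b ∧ R.act b a = a

def span (A : Set X) : Set X := ⋂₀ {S | A ⊆ S ∧ R.IsActClosed S}

variable {R}

theorem Commutes.symm {a b : X} (h : R.Commutes a b) : R.Commutes b a := ⟨h.2, h.1⟩

theorem subset_span (A : Set X) : A ⊆ R.span A := fun _ ha _ hS => hS.1 ha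

theorem span_subset {A S : Set X} (hA : A ⊆ S) (hS : R.IsActClosed S) : R.span A ⊆ S :=
  fun _ hx => hx S ⟨hA, hS⟩

theorem isActClosed_span (A : Set X) : R.IsActClosed (R.span A) :=
  fun x hx y hy S hS => hS.2 x (hx S hS) y (hy S hS)

theorem isActClosed_setOf_commutes (b : X) : R.IsActClosed {d | R.Commutes d b} := by
  rintro x ⟨hxb, hbx⟩ y ⟨hyb, hby⟩
  constructor
  · calc R.act (R.act x y) b = R.act (R.act x y) (R.act x b) := by rw [hxb]
      _ = R.act x (R.act y b) := (R.self_distrib x y b).symm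
      _ = b := by rw [hyb, hxb]
  · rw [R.self_distrib, hbx, hby]

theorem commutes_of_mem_span {A B : Set X} (h : ∀ a ∈ A, ∀ b ∈ B, R.Commutes a b) :
    ∀ a ∈ R.span A, ∀ b ∈ R.span B, R.Commutes a b := by
  intro a ha b hb
  have ha' : ∀ b ∈ B, R.Commutes a b := fun b hb =>
    span_subset (fun a ha => h a ha b hb) (isActClosed_setOf_commutes b) ha
  exact (span_subset (fun b hb => (ha' b hb).symm) (isActClosed_setOf_commutes a) hb).symm

theorem IsActClosed.union_of_commutes {S T : Set X} (hS : R.IsActClosed S)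
    (hT : R.IsActClosed T) (h : ∀ a ∈ S, ∀ b ∈ T, R.Commutes a b) :
    R.IsActClosed (S ∪ T) := by
  rintro x (hx | hx) y (hy | hy)
  · exact .inl (hS x hx y hy)
  · rw [(h x hx y hy).1]
    exact .inr hy
  · rw [(h y hy x hx).2]
    exact .inl hy
  · exact .inr (hT x hx y hy)

namespace IsInvolutory

theorem isSubrack (hR : R.IsInvolutory) {S : Set X} (hne : S.Nonempty)
    (hS : R.IsActClosed S) : R.IsSubrack S :=
  ⟨hne, hS, fun x hx y hy => ⟨R.act x y, hS x hx y hy, hR x y⟩⟩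

theorem generates_iff (hR : R.IsInvolutory) {Y : Set X} (hY : Y.Nonempty) :
    R.Generates Y ↔ R.span Y = Set.univ :=
  ⟨fun h => h _ (hR.isSubrack (hY.mono (subset_span Y)) (isActClosed_span Y)) (subset_span Y),
    fun h _ hS hYS => Set.eq_univ_of_univ_subset (h ▸ span_subset hYS hS.2.1)⟩

theorem phi_inv (hR : R.IsInvolutory) (x : X) : (R.phi x)⁻¹ = R.phi x :=
  inv_eq_of_mul_eq_one_right (Equiv.ext (hR x))

theorem mapsTo_of_mem_innerGroup (hR : R.IsInvolutory) {S : Set X}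
    (hS : ∀ x, Set.MapsTo (R.act x) S S) {g : Equiv.Perm X} (hg : g ∈ R.innerGroup) :
    Set.MapsTo g S S := by
  induction hg using Subgroup.closure_induction'' with
  | mem _ hx =>
    obtain ⟨x, rfl⟩ := hx
    exact hS x
  | inv_mem _ hx =>
    obtain ⟨x, rfl⟩ := hx
    rw [hR.phi_inv]
    exact hS x
  | one => exact Set.mapsTo_id S
  | mul _ _ _ _ hg hh => exact hg.comp hh

theorem eq_univ_of_mapsTo (hR : R.IsInvolutory) (hInd : R.IsIndecomposable) {S : Set X}
    (hne : S.Nonempty) (hS : ∀ x, Set.MapsTo (R.act x) S S) : S = Set.univ := by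
  obtain ⟨s, hs⟩ := hne
  refine Set.eq_univ_of_forall fun y => ?_
  obtain ⟨g, hg, rfl⟩ := hInd s y
  exact hR.mapsTo_of_mem_innerGroup hS hg hs

theorem generates_of_generates_union (hR : R.IsInvolutory) (hInd : R.IsIndecomposable)
    {A B : Set X} (hA : A.Nonempty) (hAB : ∀ a ∈ A, ∀ b ∈ B, R.Commutes a b)
    (hgen : R.Generates (A ∪ B)) : R.Generates A := by
  have hspan := commutes_of_mem_span hAB
  have hcover : R.span A ∪ R.span B = Set.univ := by
    refine Set.eq_univ_of_univ_subset ?_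
    rw [← (hR.generates_iff (hA.mono Set.subset_union_left)).1 hgen]
    exact span_subset (Set.union_subset_union (subset_span A) (subset_span B))
      ((isActClosed_span A).union_of_commutes (isActClosed_span B) hspan)
  rw [hR.generates_iff hA]
  refine hR.eq_univ_of_mapsTo hInd (hA.mono (subset_span A)) fun x a ha => ?_
  rcases hcover ▸ Set.mem_univ x with hx | hx
  · exact isActClosed_span A x hx a ha
  · rw [(hspan a ha x hx).2]
    exact ha

theorem connected_of_minimal_generates (hR : R.IsInvolutory) (hInd : R.IsIndecomposable)
    {Y : Set X} (hYne : Y.Nonempty) (hgen : R.Generates Y)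
    (hmin : ∀ Y' ⊆ Y, R.Generates Y' → Y' = Y) (H : SimpleGraph Y)
    (hH : ∀ a b : Y, a ≠ b → ¬ H.Adj a b → R.Commutes a b) : H.Connected := by
  obtain ⟨y₀, hy₀⟩ := hYne
  let v₀ : Y := ⟨y₀, hy₀⟩
  let C : Set Y := {v | H.Reachable v₀ v}
  have hcover : Subtype.val '' C ∪ Subtype.val '' Cᶜ = Y := by
    rw [← Set.image_union, Set.union_compl_self, Set.image_univ, Subtype.range_coe]
  have hcomm : ∀ a ∈ Subtype.val '' C, ∀ b ∈ Subtype.val '' Cᶜ, R.Commutes a b := by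
    rintro _ ⟨u, hu, rfl⟩ _ ⟨w, hw, rfl⟩
    exact hH u w (by rintro rfl; exact hw hu) fun hadj => hw (hu.trans hadj.reachable)
  have hC : Subtype.val '' C = Y :=
    hmin _ (Subtype.coe_image_subset Y C) <| hR.generates_of_generates_union hInd
      ⟨y₀, v₀, SimpleGraph.Reachable.refl v₀, rfl⟩ hcomm (by rwa [hcover])
  refine (SimpleGraph.connected_iff_exists_forall_reachable H).2 ⟨v₀, fun v => ?_⟩
  obtain ⟨u, hu, huv⟩ : (v : X) ∈ Subtype.val '' C := by rw [hC]; exact v.2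
  exact Subtype.ext huv ▸ hu

end IsInvolutory

end Rack'

theorem commute_of_mul_self_eq_one {G : Type*} [Group G] {a b : G} (ha : a * a = 1)
    (hb : b * b = 1) (hab : (a * b) ^ 2 = 1) : Commute a b :=
  calc a * b = (a * b)⁻¹ := (inv_eq_of_mul_eq_one_right (by rwa [sq] at hab)).symm
    _ = b * a := by
      rw [mul_inv_rev, inv_eq_of_mul_eq_one_right ha, inv_eq_of_mul_eq_one_right hb]

section conjSetRack

variable {G : Type*} [Group G] {D : Set G} (hD : ∀ g : G, ∀ x ∈ D, g * x * g⁻¹ ∈ D)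

theorem conjSetRack_isInvolutory (hinv : ∀ x ∈ D, x * x = 1) :
    (conjSetRack D hD).IsInvolutory := fun x y =>
  Subtype.ext <| show (x : G) * (x * y * (x : G)⁻¹) * (x : G)⁻¹ = y by
    rw [inv_eq_of_mul_eq_one_right (hinv x x.2)]
    simp [← mul_assoc, hinv x x.2, mul_assoc _ (x : G) (x : G)]

theorem conjSetRack_commutes {a b : D} (h : Commute (a : G) b) :
    (conjSetRack D hD).Commutes a b :=
  ⟨Subtype.ext (show (a : G) * b * (a : G)⁻¹ = b by rw [h.eq, mul_inv_cancel_right]),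
    Subtype.ext (show (b : G) * a * (b : G)⁻¹ = a by rw [h.symm.eq, mul_inv_cancel_right])⟩

end conjSetRack

theorem graph_of_minimal_generating_set_connected_general {G : Type*} [Group G]
    (D : Set G)
    (hinv : ∀ x ∈ D, x * x = 1 ∧ x ≠ 1)
    (hconj : ∀ g : G, ∀ x ∈ D, g * x * g⁻¹ ∈ D)
    (hord : ∀ x ∈ D, ∀ y ∈ D, orderOf (x * y) ∈ ({1, 2, 3} : Set ℕ))
    (hInd : (conjSetRack D hconj).IsIndecomposable)
    (Y : Set D) (hYne : Y.Nonempty)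
    (hY : ∀ S : Set D, (conjSetRack D hconj).IsSubrack S → Y ⊆ S → S = Set.univ)
    (hmin : ∀ Y' : Set D, Y' ⊆ Y →
      (∀ S : Set D, (conjSetRack D hconj).IsSubrack S → Y' ⊆ S → S = Set.univ) →
      Y' = Y) :
    (SimpleGraph.fromRel fun a b : Y => orderOf ((a : G) * (b : G)) = 3).Connected := by
  have hsq : ∀ x ∈ D, x * x = 1 := fun x hx => (hinv x hx).1
  refine (conjSetRack_isInvolutory hconj hsq).connected_of_minimal_generates hInd hYne hY hmin
    _ fun a b hab hnadj => conjSetRack_commutes hconj ?_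
  have hne3 : orderOf ((a : G) * b) ≠ 3 := fun h3 =>
    hnadj ((SimpleGraph.fromRel_adj _ a b).2 ⟨hab, .inl h3⟩)
  have hdvd : orderOf ((a : G) * b) ∣ 2 := by
    rcases hord a a.1.2 b b.1.2 with h | h | h
    · simp [h]
    · simp [h]
    · exact absurd h hne3
  exact commute_of_mul_self_eq_one (hsq a a.1.2) (hsq b b.1.2) (orderOf_dvd_iff_pow_eq_one.1 hdvd)

/-- Let `(G, D)` be a `3`-transposition group with `D` finite, such that `D` is an
indecomposable rack under conjugation, and let `Y ⊆ D` be a minimal subset generating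
`D` as a rack. Then the graph on `Y` in which distinct `x, y` are adjacent iff
`ord(xy) = 3` is connected. -/
theorem graph_of_minimal_generating_set_connected {G : Type*} [Group G]
    (D : Set G) (hfin : D.Finite) (hne : D.Nonempty)
    (hinv : ∀ x ∈ D, x * x = 1 ∧ x ≠ 1)
    (hconj : ∀ g : G, ∀ x ∈ D, g * x * g⁻¹ ∈ D)
    (hgen : Subgroup.closure D = ⊤)
    (hord : ∀ x ∈ D, ∀ y ∈ D, orderOf (x * y) ∈ ({1, 2, 3} : Set ℕ))
    (hInd : (conjSetRack D hconj).IsIndecomposable)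
    (Y : Set D) (hYne : Y.Nonempty)
    (hY : ∀ S : Set D, (conjSetRack D hconj).IsSubrack S → Y ⊆ S → S = Set.univ)
    (hmin : ∀ Y' : Set D, Y' ⊆ Y →
      (∀ S : Set D, (conjSetRack D hconj).IsSubrack S → Y' ⊆ S → S = Set.univ) →
      Y' = Y) :
    (SimpleGraph.fromRel fun a b : Y => orderOf ((a : G) * (b : G)) = 3).Connected :=
  graph_of_minimal_generating_set_connected_general D hinv hconj hord hInd Y hYne hY hmin
end

section
/- Let X′ be a finite indecomposable braided rack and let X be a proper subrack of X′ which is itself indecomposable. Then for all x ∈ X and all x′ ∈ X′ one has #{z ∈ X : x ▷ z ≠ z} < #{z ∈ X′ : x′ ▷ z ≠ z}; that is, k₃(X) < k₃(X′). -/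
/-!
If every point moved by `φ_{ι x}` lay in `range ι`, the same would hold for every `y ∈ X`:
translations by points of `range ι` preserve `range ι`, and the points moved by `φ_{a ▷ y}` are
the images under `φ_a` of those moved by `φ_y`, so these `y` form an `Inn(X)`-stable set. As in a
braided rack `u ▷ v = v` forces `v ▷ u = u`, every point outside `range ι` would then fix
`range ι` pointwise, making `range ι` an `Inn(X')`-stable proper subset of `X'`. Hence `φ_{ι x}`
moves a point outside `range ι` besides the images of the points moved by `φ_x`. The same image
formula for moved points shows that `k₃` does not depend on the point.
-/

namespace Rack'

section

variable {X : Type*} (R : Rack' X)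

def moved (x : X) : Set X := {z | R.act x z ≠ z}

open scoped Pointwise in
theorem innerGroup_le_stabilizer {T : Set X} (hT : ∀ a y, R.act a y ∈ T ↔ y ∈ T) :
    R.innerGroup ≤ MulAction.stabilizer (Equiv.Perm X) T := by
  rw [innerGroup, Subgroup.closure_le]
  rintro _ ⟨a, rfl⟩
  exact MulAction.mem_stabilizer_set.mpr (hT a)

variable {R}

theorem IsIndecomposable.eq_univ_of_act_mem_iff (hInd : R.IsIndecomposable) {T : Set X}
    (hT : ∀ a y, R.act a y ∈ T ↔ y ∈ T) {x : X} (hx : x ∈ T) : T = Set.univ := by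
  refine Set.eq_univ_of_forall fun y => ?_
  obtain ⟨g, hg, rfl⟩ := hInd x y
  exact (MulAction.mem_stabilizer_set.mp (R.innerGroup_le_stabilizer hT hg) x).mpr hx

theorem moved_act (a b : X) : R.moved (R.act a b) = R.act a '' R.moved b := by
  ext z
  obtain ⟨w, rfl⟩ := (R.act_bijective a).2 z
  simp only [moved, Set.mem_ofPred_eq, ← R.self_distrib, (R.act_bijective a).1.mem_set_image,
    (R.act_bijective a).1.ne_iff]

theorem IsIndecomposable.ncard_moved_eq (hInd : R.IsIndecomposable) (b c : X) :
    (R.moved b).ncard = (R.moved c).ncard := by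
  have hT : ∀ a y, R.act a y ∈ {c | (R.moved c).ncard = (R.moved b).ncard} ↔
      y ∈ {c | (R.moved c).ncard = (R.moved b).ncard} := by
    intro a y
    simp only [Set.mem_ofPred_eq, moved_act, Set.ncard_image_of_injective _ (R.act_bijective a).1]
  exact (Set.eq_univ_iff_forall.mp (hInd.eq_univ_of_act_mem_iff hT rfl) c).symm

theorem moved_act_subset_iff {T : Set X} {b : X} (hT : ∀ z, R.act b z ∈ T ↔ z ∈ T) (c : X) :
    R.moved (R.act b c) ⊆ T ↔ R.moved c ⊆ T := by
  rw [moved_act, Set.image_subset_iff, show R.act b ⁻¹' T = T from Set.ext hT]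

theorem act_mem_iff_of_forall_act_eq {T : Set X} {u : X} (hu : ∀ z ∈ T, R.act u z = z)
    (z : X) : R.act u z ∈ T ↔ z ∈ T := by
  refine ⟨fun h => ?_, fun h => (hu z h).symm ▸ h⟩
  rwa [(R.act_bijective u).1 (hu _ h)] at h

theorem IsBraided.act_eq_self_symm (hB : R.IsBraided) {u v : X} (h : R.act u v = v) :
    R.act v u = u := by
  rcases hB.2 v u with h' | h'
  · rw [h, hB.1 v] at h'
    rw [← h', hB.1]
  · exact h'

end

section

variable {X X' : Type*} {R : Rack' X} {R' : Rack' X'} {ι : X → X'}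

theorem act_mem_range_iff (hmor : ∀ a b, ι (R.act a b) = R'.act (ι a) (ι b)) (a : X) (z : X') :
    R'.act (ι a) z ∈ Set.range ι ↔ z ∈ Set.range ι := by
  constructor
  · rintro ⟨b, hb⟩
    obtain ⟨c, rfl⟩ := (R.act_bijective a).2 b
    rw [hmor] at hb
    exact ⟨c, (R'.act_bijective (ι a)).1 hb⟩
  · rintro ⟨b, rfl⟩
    exact ⟨R.act a b, hmor a b⟩

theorem moved_subset_range (hInd : R.IsIndecomposable)
    (hmor : ∀ a b, ι (R.act a b) = R'.act (ι a) (ι b)) {x : X}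
    (hx : R'.moved (ι x) ⊆ Set.range ι) (y : X) : R'.moved (ι y) ⊆ Set.range ι := by
  have hT : ∀ a y, R.act a y ∈ {y | R'.moved (ι y) ⊆ Set.range ι} ↔
      y ∈ {y | R'.moved (ι y) ⊆ Set.range ι} := by
    intro a y
    simp only [Set.mem_ofPred_eq, hmor]
    exact R'.moved_act_subset_iff (act_mem_range_iff hmor a) (ι y)
  exact Set.eq_univ_iff_forall.mp (hInd.eq_univ_of_act_mem_iff hT hx) y

theorem not_moved_subset_range (hR' : R'.IsBraided) (hInd' : R'.IsIndecomposable)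
    (hInd : R.IsIndecomposable) (hmor : ∀ a b, ι (R.act a b) = R'.act (ι a) (ι b))
    (hproper : ¬Function.Surjective ι) (x : X) : ¬R'.moved (ι x) ⊆ Set.range ι := by
  intro hx
  have hfix : ∀ u ∉ Set.range ι, ∀ s ∈ Set.range ι, R'.act u s = s := by
    rintro u hu _ ⟨y, rfl⟩
    refine hR'.act_eq_self_symm (not_not.mp fun hmoved => hu ?_)
    exact moved_subset_range hInd hmor hx y hmoved
  have hrange : ∀ u z, R'.act u z ∈ Set.range ι ↔ z ∈ Set.range ι := by
    intro u z
    by_cases hu : u ∈ Set.range ι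
    · obtain ⟨a, rfl⟩ := hu
      exact act_mem_range_iff hmor a z
    · exact R'.act_mem_iff_of_forall_act_eq (hfix u hu) z
  exact hproper (Set.range_eq_univ.mp (hInd'.eq_univ_of_act_mem_iff hrange (Set.mem_range_self x)))

theorem image_moved_subset (hι : Function.Injective ι)
    (hmor : ∀ a b, ι (R.act a b) = R'.act (ι a) (ι b)) (x : X) :
    ι '' R.moved x ⊆ R'.moved (ι x) := by
  rintro _ ⟨z, hz, rfl⟩
  change R'.act (ι x) (ι z) ≠ ι z
  rw [← hmor]
  exact hι.ne hz

end

end Rack'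

theorem k3_lt_of_proper_subrack_general {X X' : Type*} [Finite X']
    (R : Rack' X) (R' : Rack' X')
    (hR' : R'.IsBraided) (hInd' : R'.IsIndecomposable) (hInd : R.IsIndecomposable)
    (ι : X → X') (hι : Function.Injective ι)
    (hmor : ∀ a b : X, ι (R.act a b) = R'.act (ι a) (ι b))
    (hproper : ¬Function.Surjective ι)
    (x : X) (x' : X') :
    {z : X | R.act x z ≠ z}.ncard < {z : X' | R'.act x' z ≠ z}.ncard := by
  change (R.moved x).ncard < (R'.moved x').ncard
  rw [hInd'.ncard_moved_eq x' (ι x), ← Set.ncard_image_of_injective _ hι]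
  refine Set.ncard_lt_ncard ((Rack'.image_moved_subset hι hmor x).ssubset_of_not_subset ?_)
  exact fun h => Rack'.not_moved_subset_range hR' hInd' hInd hmor hproper x
    (h.trans (Set.image_subset_range _ _))

/-- If `X` is a proper subrack (here: the image of a non-surjective injective rack
morphism) of a finite indecomposable braided rack `X'`, and `X` is itself
indecomposable, then `k₃(X) < k₃(X')`: for all `x ∈ X` and `x' ∈ X'`,
`#{z ∈ X : x ▷ z ≠ z} < #{z ∈ X' : x' ▷ z ≠ z}`. -/
theorem k3_lt_of_proper_subrack {X X' : Type*} [Finite X] [Finite X']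
    (R : Rack' X) (R' : Rack' X')
    (hR' : R'.IsBraided) (hInd' : R'.IsIndecomposable) (hInd : R.IsIndecomposable)
    (ι : X → X') (hι : Function.Injective ι)
    (hmor : ∀ a b : X, ι (R.act a b) = R'.act (ι a) (ι b))
    (hproper : ¬Function.Surjective ι)
    (x : X) (x' : X') :
    {z : X | R.act x z ≠ z}.ncard < {z : X' | R'.act x' z ≠ z}.ncard :=
  k3_lt_of_proper_subrack_general R R' hR' hInd' hInd ι hι hmor hproper x x'
end
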